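/- Let F = (x²+y²−2zt)/2, ε ∈ {1,−1}, S = (1, εi, z₀, 0), and define ψ(m) = −2tz₀·m + σ(m) where σ(m) = Q(∇F)(m)·S − 2Δ_S F(m)·κ(∇F)(m). Then for every (x,y,z,t) with x²+y² = 2zt, ψ(x,y,z,t) = (−(x+iεy)² + t², iε((x+iεy)² + t²), −z₀t² + 2(x+iεy)t, −2t²z₀). In particular, writing (X,Y,Z,T) = ψ(x,y,z,t), one has X − iεY = 2t² and X + iεY = −2(x+iεy)², so the image satisfies the two equations z₀iεX + z₀Y + iεT = 0 and (Z − T/2)² + X² + Y² = 0, i.e. the caustic is a planar conic. -/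
import Mathlib


noncomputable section
open Complex

/-- `Δ_S F = x₀x + y₀y − z₀t − t₀z` for the paraboloid `F = (x²+y²−2zt)/2`. -/
def pDelta (x0 y0 z0 t0 x y z t : ℂ) : ℂ := x0 * x + y0 * y - z0 * t - t0 * z

/-- `σ(m) = Q(∇F)(m)·S − 2Δ_S F(m)·κ(∇F)(m)` for the paraboloid,
with `Q(∇F) = x²+y²+t²` and `κ(∇F) = (x,y,−t,0)`. -/
def pSigma (x0 y0 z0 t0 x y z t : ℂ) : Fin 4 → ℂ :=
  fun i => (x ^ 2 + y ^ 2 + (-t) ^ 2) * (![x0, y0, z0, t0] : Fin 4 → ℂ) i -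
    2 * pDelta x0 y0 z0 t0 x y z t * (![x, y, -t, 0] : Fin 4 → ℂ) i

/-- `ψ(m) = −2tz₀·m + σ(m)` for the paraboloid and `S = (1, εi, z₀, 0)`. -/
def psi10 (ε z0 x y z t : ℂ) : Fin 4 → ℂ :=
  fun i => -2 * t * z0 * (![x, y, z, t] : Fin 4 → ℂ) i + pSigma 1 (ε * I) z0 0 x y z t i

/-- For the paraboloid `x²+y² = 2zt` and `S = (1, εi, z₀, 0)` with `ε = ±1`, the map
`ψ = −2tz₀·Id + σ` has the stated explicit form, and its image satisfies
`z₀iεX + z₀Y + iεT = 0` and `(Z − T/2)² + X² + Y² = 0`: the caustic is a planar conic. -/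
theorem stmt10 (ε : ℂ) (hε : ε = 1 ∨ ε = -1) (z0 : ℂ) (x y z t : ℂ)
    (hF : x ^ 2 + y ^ 2 = 2 * z * t) :
    psi10 ε z0 x y z t =
      (![-(x + I * ε * y) ^ 2 + t ^ 2, I * ε * ((x + I * ε * y) ^ 2 + t ^ 2),
        -z0 * t ^ 2 + 2 * (x + I * ε * y) * t, -2 * t ^ 2 * z0] : Fin 4 → ℂ) ∧
    z0 * I * ε * psi10 ε z0 x y z t 0 + z0 * psi10 ε z0 x y z t 1 +
      I * ε * psi10 ε z0 x y z t 3 = 0 ∧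
    (psi10 ε z0 x y z t 2 - psi10 ε z0 x y z t 3 / 2) ^ 2 +
      psi10 ε z0 x y z t 0 ^ 2 + psi10 ε z0 x y z t 1 ^ 2 = 0 := by
  have hI : I ^ 2 = -1 := Complex.I_sq
  have he2 : ε ^ 2 = 1 := by rcases hε with h | h <;> subst h <;> ring
  have hmain : psi10 ε z0 x y z t =
      (![-(x + I * ε * y) ^ 2 + t ^ 2, I * ε * ((x + I * ε * y) ^ 2 + t ^ 2),
        -z0 * t ^ 2 + 2 * (x + I * ε * y) * t, -2 * t ^ 2 * z0] : Fin 4 → ℂ) := by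
    funext i
    fin_cases i
    · simp [psi10, pSigma, pDelta]
      linear_combination (y ^ 2 * ε ^ 2) * hI + (-(y ^ 2)) * he2
    · simp [psi10, pSigma, pDelta]
      linear_combination (-(y ^ 2) * I * ε ^ 3 - 2 * x * y * ε ^ 2) * hI +
        (y ^ 2 * I * ε + 2 * x * y) * he2
    · simp [psi10, pSigma, pDelta]
      linear_combination z0 * hF
    · simp [psi10, pSigma, pDelta]
      ring
  refine ⟨hmain, ?_, ?_⟩ <;> rw [hmain] <;> simp only [Matrix.cons_val_zero,
    Matrix.cons_val_one, Matrix.head_cons, Matrix.cons_val_two, Matrix.tail_cons,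
    Matrix.cons_val_three]
  · ring
  · linear_combination
      (t^4*ε^2 + 2*y^2*t^2*ε^2 - 2*y^2*t^2*ε^4 + 2*y^2*t^2*I^2*ε^4 - y^4*ε^4 + y^4*ε^6
        + y^4*I^2*ε^4 - y^4*I^2*ε^6 + y^4*I^4*ε^6 + 4*x*y*t^2*I*ε^3 + 4*x*y^3*I*ε^3
        - 4*x*y^3*I*ε^5 + 4*x*y^3*I^3*ε^5 + 2*x^2*t^2*ε^2 + 6*x^2*y^2*ε^2 - 6*x^2*y^2*ε^4
        + 6*x^2*y^2*I^2*ε^4 + 4*x^3*y*I*ε^3 + x^4*ε^2) * hI +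
      (-(t^4) + 2*y^2*t^2*ε^2 - y^4*ε^4 - 4*x*y*t^2*I*ε + 4*x*y^3*I*ε^3 - 2*x^2*t^2
        + 6*x^2*y^2*ε^2 - 4*x^3*y*I*ε - x^4) * he2
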